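/- arXiv:1302.3433 — 6 statements merged into one kernel-verified Lean document; each statement's English description precedes it below -/
import Mathlib

section
/- Let G be a finite simple undirected graph with no isolated vertices, with adjacency matrix A and degree d_u at each vertex u. Let Ã = D^{-1}A be the row-normalised adjacency matrix of G (where D is the diagonal degree matrix), and let Ũ be the row-normalised adjacency matrix of the line graph of G, indexed by the directed edges of G, i.e. Ũ_{(u,v),(w,x)} = 1/d_v if v = w, and 0 otherwise. If g : V → ℝ is a nonzero vector with Ã g = λ g, then the vector h on directed edges defined by h_{(u,v)} = g_v is nonzero and satisfies Ũ h = λ h. In other words, every eigenpair {λ, g} of the row-normalised adjacency matrix of G lifts to an eigenpair {λ, h} of the row-normalised adjacency matrix of the line graph of G. -/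
open Matrix Finset

/-- Every eigenpair `{λ, g}` of the row-normalised adjacency matrix of a finite simple
graph `G` with no isolated vertices lifts to an eigenpair `{λ, h}` of the row-normalised
adjacency matrix of the line graph of `G` (indexed by directed edges), where
`h (u,v) = g v`. -/
theorem lineGraph_rowNormalised_eigenpair_lift
    {V : Type*} [Fintype V] [DecidableEq V]
    (G : SimpleGraph V) [DecidableRel G.Adj]
    (hdeg : ∀ v : V, 0 < G.degree v)
    (Atil : Matrix V V ℝ)
    (hAtil : ∀ u v : V, Atil u v = if G.Adj u v then ((G.degree u : ℝ))⁻¹ else 0)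
    (Util : Matrix {p : V × V // G.Adj p.1 p.2} {p : V × V // G.Adj p.1 p.2} ℝ)
    (hUtil : ∀ e f : {p : V × V // G.Adj p.1 p.2},
      Util e f = if e.1.2 = f.1.1 then ((G.degree e.1.2 : ℝ))⁻¹ else 0)
    (g : V → ℝ) (hg : g ≠ 0) (lam : ℝ)
    (heig : Atil *ᵥ g = lam • g)
    (h : {p : V × V // G.Adj p.1 p.2} → ℝ)
    (hh : ∀ e : {p : V × V // G.Adj p.1 p.2}, h e = g e.1.2) :
    h ≠ 0 ∧ Util *ᵥ h = lam • h := by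
  constructor
  · -- h ≠ 0
    intro h0
    apply hg
    funext v
    -- v has a neighbor w, so (w, v) is a directed edge
    obtain ⟨w, hw⟩ : ∃ w, G.Adj v w := by
      have := hdeg v
      rw [← SimpleGraph.card_neighborFinset_eq_degree, Finset.card_pos] at this
      obtain ⟨w, hw⟩ := this
      exact ⟨w, (G.mem_neighborFinset v w).mp hw⟩
    have : h ⟨(w, v), hw.symm⟩ = 0 := by rw [h0]; rfl
    rw [hh] at this
    exact this
  · funext e
    have key : (Util *ᵥ h) e = (Atil *ᵥ g) e.1.2 := by
      simp only [mulVec, dotProduct, hUtil, hAtil, hh]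
      rw [← Finset.sum_subtype (Finset.univ.filter (fun p : V × V => G.Adj p.1 p.2))
        (by simp) (fun p : V × V => (if e.1.2 = p.1 then ((G.degree e.1.2 : ℝ))⁻¹ else 0) * g p.2)]
      rw [Finset.sum_filter, Fintype.sum_prod_type]
      rw [show (∑ a : V, ∑ b : V, if G.Adj a b then
          (if e.1.2 = a then ((G.degree e.1.2 : ℝ))⁻¹ else 0) * g b else 0)
        = ∑ a : V, if e.1.2 = a then
            (∑ b : V, if G.Adj a b then ((G.degree e.1.2 : ℝ))⁻¹ * g b else 0) else 0 from
        Finset.sum_congr rfl fun a _ => by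
          split_ifs with ha
          · exact Finset.sum_congr rfl fun b _ => by split_ifs <;> simp
          · exact Finset.sum_eq_zero fun b _ => by split_ifs <;> simp [ha]]
      rw [Finset.sum_ite_eq Finset.univ e.1.2]
      simp only [Finset.mem_univ, if_true]
      exact Finset.sum_congr rfl fun b _ => by split_ifs <;> simp
    rw [key, heig]
    simp [hh]
end

section
/- Let G be a finite simple undirected graph with adjacency matrix A, and let T be the adjacency matrix of the oriented line graph of G (the Hashimoto matrix), indexed by directed edges, with T_{(u,v),(w,x)} = 1 if v = w and u ≠ x, and 0 otherwise. Suppose w : V × V → ℝ satisfies: (i) w_{uv} = -w_{vu} for all u, v (antisymmetry); (ii) w_{uv} = 0 whenever A_{uv} = 0; (iii) Σ_v w_{uv} = 0 for every vertex u. Then the vector s on directed edges defined by s_{(u,v)} = w_{uv} satisfies T s = s; in particular, if w is not identically zero, then s is an eigenvector of T with eigenvalue 1. -/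
open Matrix Finset

/-- If `w : V × V → ℝ` is antisymmetric, vanishes on non-adjacent pairs, and its rows sum
to zero, then the induced vector `s` on directed edges satisfies `T s = s`, where `T` is
the Hashimoto matrix (adjacency matrix of the oriented line graph); in particular, if `w`
is not identically zero then `s` is an eigenvector of `T` with eigenvalue `1`. -/
theorem hashimoto_eigenvector_one_of_antisymmetric
    {V : Type*} [Fintype V] [DecidableEq V]
    (G : SimpleGraph V) [DecidableRel G.Adj]
    (T : Matrix {p : V × V // G.Adj p.1 p.2} {p : V × V // G.Adj p.1 p.2} ℝ)
    (hT : ∀ e f : {p : V × V // G.Adj p.1 p.2},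
      T e f = if e.1.2 = f.1.1 ∧ e.1.1 ≠ f.1.2 then 1 else 0)
    (w : V → V → ℝ)
    (hanti : ∀ u v : V, w u v = - w v u)
    (hsupp : ∀ u v : V, ¬ G.Adj u v → w u v = 0)
    (hsum : ∀ u : V, ∑ v : V, w u v = 0)
    (s : {p : V × V // G.Adj p.1 p.2} → ℝ)
    (hs : ∀ e : {p : V × V // G.Adj p.1 p.2}, s e = w e.1.1 e.1.2) :
    T *ᵥ s = s ∧ ((∃ u v : V, w u v ≠ 0) → s ≠ 0) := by
  constructor
  · funext e
    obtain ⟨⟨u, v⟩, huv⟩ := e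
    have key : ∀ p : V × V,
        (if v = p.1 ∧ u ≠ p.2 then w p.1 p.2 else 0)
          = if p.1 = v then (if p.2 = u then 0 else w v p.2) else 0 := by
      rintro ⟨a, b⟩
      by_cases ha : a = v
      · subst ha
        by_cases hb : b = u
        · subst hb; simp
        · simp [hb, Ne.symm hb]
      · have hna : ¬(v = a ∧ u ≠ b) := fun h => ha h.1.symm
        simp [hna, ha]
    have hmul : (T *ᵥ s) ⟨(u, v), huv⟩
        = ∑ f : {p : V × V // G.Adj p.1 p.2},
            (if v = f.1.1 ∧ u ≠ f.1.2 then w f.1.1 f.1.2 else 0) := by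
      simp only [mulVec, dotProduct]
      refine Finset.sum_congr rfl fun f _ => ?_
      rw [hT, hs]
      by_cases h : v = f.1.1 ∧ u ≠ f.1.2 <;> simp [h]
    rw [hmul]
    have hsub : ∑ f : {p : V × V // G.Adj p.1 p.2},
          (if v = f.1.1 ∧ u ≠ f.1.2 then w f.1.1 f.1.2 else 0)
        = ∑ p : V × V, (if v = p.1 ∧ u ≠ p.2 then w p.1 p.2 else 0) := by
      rw [← Finset.sum_subtype (Finset.univ.filter fun p : V × V => G.Adj p.1 p.2)
        (fun p => by simp) (fun p : V × V => if v = p.1 ∧ u ≠ p.2 then w p.1 p.2 else 0)]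
      refine Finset.sum_subset (Finset.filter_subset _ _) fun p _ hp => ?_
      simp only [Finset.mem_filter, Finset.mem_univ, true_and] at hp
      simp [hsupp p.1 p.2 hp]
    rw [hsub]
    simp only [key]
    rw [Fintype.sum_prod_type]
    rw [Finset.sum_eq_single v]
    · have h2 : (∑ y : V, if (v, y).1 = v then (if (v, y).2 = u then 0 else w v (v, y).2) else 0)
          = ∑ y : V, (w v y - if y = u then w v y else 0) := by
        refine Finset.sum_congr rfl fun b _ => ?_
        by_cases hb : b = u <;> simp [hb]
      rw [h2, Finset.sum_sub_distrib, hsum v,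
        Finset.sum_ite_eq' Finset.univ u (fun b => w v b)]
      simp [hs, hanti v u]
    · intro a _ ha; simp [ha]
    · intro h; exact absurd (Finset.mem_univ v) h
  · rintro ⟨u, v, hw⟩
    have hadj : G.Adj u v := by
      by_contra h
      exact hw (hsupp u v h)
    intro h0
    apply hw
    have := congrFun h0 ⟨(u, v), hadj⟩
    rw [hs] at this
    simpa using this
end

section
/- Let G be a finite simple undirected graph with adjacency matrix A, and let T be the adjacency matrix of the oriented line graph of G (the Hashimoto matrix), indexed by directed edges, with T_{(u,v),(w,x)} = 1 if v = w and u ≠ x, and 0 otherwise. Suppose w : V × V → ℝ satisfies: (i) w_{uv} = w_{vu} for all u, v (symmetry); (ii) w_{uv} = 0 whenever A_{uv} = 0; (iii) Σ_v w_{uv} = 0 for every vertex u. Then the vector s on directed edges defined by s_{(u,v)} = w_{uv} satisfies T s = -s; in particular, if w is not identically zero, then s is an eigenvector of T with eigenvalue -1. -/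
open Matrix Finset

/-- If `w : V × V → ℝ` is symmetric, vanishes on non-adjacent pairs, and its rows sum
to zero, then the induced vector `s` on directed edges satisfies `T s = -s`, where `T` is
the Hashimoto matrix (adjacency matrix of the oriented line graph); in particular, if `w`
is not identically zero then `s` is an eigenvector of `T` with eigenvalue `-1`. -/
theorem hashimoto_eigenvector_neg_one_of_symmetric
    {V : Type*} [Fintype V] [DecidableEq V]
    (G : SimpleGraph V) [DecidableRel G.Adj]
    (T : Matrix {p : V × V // G.Adj p.1 p.2} {p : V × V // G.Adj p.1 p.2} ℝ)
    (hT : ∀ e f : {p : V × V // G.Adj p.1 p.2},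
      T e f = if e.1.2 = f.1.1 ∧ e.1.1 ≠ f.1.2 then 1 else 0)
    (w : V → V → ℝ)
    (hsymm : ∀ u v : V, w u v = w v u)
    (hsupp : ∀ u v : V, ¬ G.Adj u v → w u v = 0)
    (hsum : ∀ u : V, ∑ v : V, w u v = 0)
    (s : {p : V × V // G.Adj p.1 p.2} → ℝ)
    (hs : ∀ e : {p : V × V // G.Adj p.1 p.2}, s e = w e.1.1 e.1.2) :
    T *ᵥ s = - s ∧ ((∃ u v : V, w u v ≠ 0) → s ≠ 0) := by
  constructor
  · funext e
    obtain ⟨⟨u, v⟩, huv⟩ := e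
    simp only [mulVec, dotProduct, Pi.neg_apply, hs, hT]
    -- goal : ∑ f, (if v = f.1.1 ∧ u ≠ f.1.2 then 1 else 0) * w f.1.1 f.1.2 = -(w u v)
    have key : ∑ f : {p : V × V // G.Adj p.1 p.2},
        (if v = f.1.1 ∧ u ≠ f.1.2 then (1:ℝ) else 0) * w f.1.1 f.1.2
        = ∑ p : V × V, (if v = p.1 ∧ u ≠ p.2 then (1:ℝ) else 0) * w p.1 p.2 := by
      rw [← Finset.sum_filter_add_sum_filter_not Finset.univ
        (fun p : V × V => G.Adj p.1 p.2)]
      have h2 : ∑ p ∈ Finset.univ.filter (fun p : V × V => ¬ G.Adj p.1 p.2),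
          (if v = p.1 ∧ u ≠ p.2 then (1:ℝ) else 0) * w p.1 p.2 = 0 := by
        refine Finset.sum_eq_zero fun p hp => ?_
        rw [Finset.mem_filter] at hp
        rw [hsupp p.1 p.2 hp.2, mul_zero]
      rw [h2, add_zero]
      rw [Finset.sum_filter]
      rw [← Finset.sum_filter]
      exact (Finset.sum_subtype (Finset.univ.filter fun p : V × V => G.Adj p.1 p.2)
        (p := fun p : V × V => G.Adj p.1 p.2)
        (fun p => by simp only [Finset.mem_filter, Finset.mem_univ, true_and])
        (fun p : V × V => (if v = p.1 ∧ u ≠ p.2 then (1:ℝ) else 0) * w p.1 p.2)).symm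
    rw [key]
    have h3 : ∀ p : V × V, (if v = p.1 ∧ u ≠ p.2 then (1:ℝ) else 0) * w p.1 p.2
        = if v = p.1 then (w p.1 p.2 - if p.2 = u then w p.1 p.2 else 0) else 0 := by
      intro ⟨a, b⟩
      by_cases hva : v = a
      · by_cases hbu : b = u
        · simp [hva, hbu]
        · have hub : u ≠ b := fun h => hbu h.symm
          simp [hva, hbu, hub]
      · simp [hva]
    simp only [h3]
    rw [Fintype.sum_prod_type]
    dsimp only
    rw [Finset.sum_eq_single_of_mem v (Finset.mem_univ v)
      (fun x _ hx => by
        have : ¬ v = x := fun h => hx h.symm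
        simp [this])]
    simp only [if_true]
    rw [Finset.sum_sub_distrib, hsum v, Finset.sum_ite_eq' Finset.univ u (fun b => w v b)]
    simp [hsymm u v]
  · rintro ⟨u, v, hw⟩ h0
    have hadj : G.Adj u v := by
      by_contra h
      exact hw (hsupp u v h)
    have := hs ⟨(u, v), hadj⟩
    rw [h0] at this
    exact hw this.symm
end

section
/- Let G be a finite connected simple undirected graph with minimum degree at least 2 which is not a cycle (equivalently, |E| > |V|), with adjacency matrix A, and let T be the adjacency matrix of the oriented line graph of G (the Hashimoto matrix). If s is a vector on the directed edges of G satisfying T s = s, then s is antisymmetric, i.e. s_{(u,v)} = -s_{(v,u)} for every directed edge (u,v), and for every vertex v the incoming values sum to zero: Σ_{u : A_{uv}=1} s_{(u,v)} = 0. -/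
open Matrix Finset

/-- Let `G` be a finite connected simple graph with minimum degree at least `2` which is
not a cycle (equivalently `|E| > |V|`), and let `T` be the Hashimoto matrix (adjacency
matrix of the oriented line graph). If `T s = s`, then `s` is antisymmetric on directed
edges and its incoming values at every vertex sum to zero. -/
theorem hashimoto_fixed_vector_antisymmetric
    {V : Type*} [Fintype V] [DecidableEq V]
    (G : SimpleGraph V) [DecidableRel G.Adj]
    (hconn : G.Connected)
    (hdeg : ∀ v : V, 2 ≤ G.degree v)
    (hcard : Fintype.card V < G.edgeFinset.card)
    (T : Matrix {p : V × V // G.Adj p.1 p.2} {p : V × V // G.Adj p.1 p.2} ℝ)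
    (hT : ∀ e f : {p : V × V // G.Adj p.1 p.2},
      T e f = if e.1.2 = f.1.1 ∧ e.1.1 ≠ f.1.2 then 1 else 0)
    (s : {p : V × V // G.Adj p.1 p.2} → ℝ)
    (hs : T *ᵥ s = s) :
    (∀ (u v : V) (huv : G.Adj u v), s ⟨(u, v), huv⟩ = - s ⟨(v, u), huv.symm⟩) ∧
    (∀ v : V, ∑ u ∈ (G.neighborFinset v).attach,
      s ⟨(u.1, v), ((G.mem_neighborFinset v u.1).mp u.2).symm⟩ = 0) := by
  classical
  -- total extension of s to all of V × V
  set S' : V × V → ℝ := fun p => if h : G.Adj p.1 p.2 then s ⟨p, h⟩ else 0 with hS'def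
  have hS' : ∀ (u v : V) (h : G.Adj u v), S' (u, v) = s ⟨(u, v), h⟩ := by
    intro u v h; simp only [hS'def]; rw [dif_pos h]
  have hS'0 : ∀ p : V × V, ¬ G.Adj p.1 p.2 → S' p = 0 := by
    intro p hp; simp only [hS'def]; rw [dif_neg hp]
  -- converting sums over the subtype to sums over V × V
  have hsub : ∀ F : V × V → ℝ, (∀ p : V × V, ¬ G.Adj p.1 p.2 → F p = 0) →
      ∑ f : {p : V × V // G.Adj p.1 p.2}, F f.1 = ∑ p : V × V, F p := by
    intro F hF
    rw [← Finset.sum_subtype (Finset.univ.filter fun p : V × V => G.Adj p.1 p.2)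
      (by simp) F]
    exact Finset.sum_filter_of_ne (fun x _ hx => by_contra fun h => hx (hF x h))
  set Out : V → ℝ := fun v => ∑ w : V, S' (v, w) with hOutdef
  -- the eigenvector equation
  have heig : ∀ (u v : V) (h : G.Adj u v),
      s ⟨(u, v), h⟩ + s ⟨(v, u), h.symm⟩ = Out v := by
    intro u v h
    have h1 : (T *ᵥ s) ⟨(u, v), h⟩ = s ⟨(u, v), h⟩ := congrFun hs _
    have h2 : (T *ᵥ s) ⟨(u, v), h⟩
        = ∑ f : {p : V × V // G.Adj p.1 p.2},
            if v = f.1.1 ∧ u ≠ f.1.2 then s f else 0 := by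
      simp only [Matrix.mulVec, dotProduct, hT, ite_mul, one_mul, zero_mul]
    have h3 : ∑ f : {p : V × V // G.Adj p.1 p.2},
        (if v = f.1.1 ∧ u ≠ f.1.2 then s f else 0)
        = ∑ p : V × V, (if v = p.1 ∧ u ≠ p.2 then S' p else 0) := by
      rw [← hsub (fun p => if v = p.1 ∧ u ≠ p.2 then S' p else 0)
        (fun p hp => by simp [hS'0 p hp])]
      · apply Finset.sum_congr rfl
        intro f _
        by_cases hc : v = f.1.1 ∧ u ≠ f.1.2
        · rw [if_pos hc, if_pos hc]
          simp only [hS'def]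
          rw [dif_pos f.2]
        · rw [if_neg hc, if_neg hc]
    have h4 : ∑ p : V × V, (if v = p.1 ∧ u ≠ p.2 then S' p else 0)
        = (∑ w : V, S' (v, w)) - S' (v, u) := by
      rw [Fintype.sum_prod_type]
      have : ∀ a : V, (∑ b : V, if v = a ∧ u ≠ b then S' (a, b) else 0)
          = if v = a then ((∑ w : V, S' (v, w)) - S' (v, u)) else 0 := by
        intro a
        by_cases ha : v = a
        · subst ha
          rw [if_pos rfl]
          have : ∀ b : V, (if v = v ∧ u ≠ b then S' (v, b) else 0)
              = S' (v, b) - (if u = b then S' (v, b) else 0) := by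
            intro b
            by_cases hb : u = b
            · subst hb; simp
            · simp [hb]
          rw [Finset.sum_congr rfl (fun b _ => this b), Finset.sum_sub_distrib,
            Finset.sum_ite_eq]
          simp
        · rw [if_neg ha]
          apply Finset.sum_eq_zero
          intro b _
          rw [if_neg (fun hc => ha hc.1)]
      rw [Finset.sum_congr rfl (fun a _ => this a), Finset.sum_ite_eq]
      simp
    have h5 : s ⟨(u, v), h⟩ = Out v - s ⟨(v, u), h.symm⟩ := by
      rw [← h1, h2, h3, h4, hS' v u h.symm, hOutdef]
    linarith
  -- Out is constant on the connected graph
  have hOutAdj : ∀ u v : V, G.Adj u v → Out u = Out v := by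
    intro u v huv
    have e1 := heig u v huv
    have e2 := heig v u huv.symm
    linarith
  have hwalk : ∀ {u v : V} (_ : G.Walk u v), Out u = Out v := by
    intro u v w
    induction w with
    | nil => rfl
    | cons h p ih => exact (hOutAdj _ _ h).trans ih
  have hconst : ∀ u v : V, Out u = Out v := fun u v =>
    (hconn.preconnected u v).elim fun w => hwalk w
  obtain ⟨v₀⟩ := hconn.nonempty
  set c : ℝ := Out v₀ with hcdef
  have hOutc : ∀ v : V, Out v = c := fun v => hconst v v₀
  -- total sum
  set Stot : ℝ := ∑ p : V × V, S' p with hStotdef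
  have hsum1 : (Fintype.card V : ℝ) * c = Stot := by
    rw [hStotdef, Fintype.sum_prod_type]
    have : ∀ a : V, (∑ b : V, S' (a, b)) = c := fun a => hOutc a
    rw [Finset.sum_congr rfl (fun a _ => this a), Finset.sum_const, Finset.card_univ,
      nsmul_eq_mul]
  -- swap sum
  have hswap : ∑ p : V × V, S' (p.2, p.1) = Stot := by
    rw [hStotdef]
    exact Fintype.sum_equiv (Equiv.prodComm V V) _ _ (fun p => rfl)
  -- summing the eigen equation over all adjacent pairs
  have hsum2 : (2 * G.edgeFinset.card : ℝ) * c = 2 * Stot := by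
    have key : ∀ p : V × V, (if G.Adj p.1 p.2 then c else 0)
        = S' p + S' (p.2, p.1) := by
      intro p
      by_cases hp : G.Adj p.1 p.2
      · rw [if_pos hp, hS' p.1 p.2 hp, hS' p.2 p.1 hp.symm]
        have := heig p.1 p.2 hp
        rw [hOutc] at this
        linarith
      · rw [if_neg hp, hS'0 p hp, hS'0 (p.2, p.1) (fun h => hp h.symm), add_zero]
    have h1 : ∑ p : V × V, (if G.Adj p.1 p.2 then c else 0) = 2 * Stot := by
      rw [Finset.sum_congr rfl (fun p _ => key p), Finset.sum_add_distrib, hswap]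
      rw [← hStotdef]; ring
    have h2 : ∑ p : V × V, (if G.Adj p.1 p.2 then c else 0)
        = ((Finset.univ.filter fun p : V × V => G.Adj p.1 p.2).card : ℝ) * c := by
      rw [← Finset.sum_filter, Finset.sum_const, nsmul_eq_mul]
    have hN : (Finset.univ.filter fun p : V × V => G.Adj p.1 p.2).card
        = 2 * G.edgeFinset.card := by
      rw [← Fintype.card_subtype, ← SimpleGraph.dart_card_eq_twice_card_edges]
      exact Fintype.card_congr
        ⟨fun p => ⟨p.1, p.2⟩, fun d => ⟨d.toProd, d.adj⟩, fun p => rfl, fun d => rfl⟩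
    rw [h2, hN] at h1
    rw [← h1]
    push_cast
    ring
  -- conclude c = 0
  have hc0 : c = 0 := by
    have h : ((G.edgeFinset.card : ℝ) - Fintype.card V) * c = 0 := by
      linear_combination hsum2 / 2 - hsum1
    rcases mul_eq_zero.mp h with h' | h'
    · exfalso
      have hmn : (Fintype.card V : ℝ) < (G.edgeFinset.card : ℝ) := by exact_mod_cast hcard
      linarith
    · exact h'
  have anti : ∀ (u v : V) (h : G.Adj u v), s ⟨(u, v), h⟩ = - s ⟨(v, u), h.symm⟩ := by
    intro u v h
    have h1 := heig u v h
    rw [hOutc v, hc0] at h1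
    linarith
  refine ⟨anti, ?_⟩
  intro v
  have hterm : ∀ u : {x // x ∈ G.neighborFinset v},
      s ⟨(u.1, v), ((G.mem_neighborFinset v u.1).mp u.2).symm⟩ = - S' (v, u.1) := by
    intro u
    have hadj : G.Adj v u.1 := (G.mem_neighborFinset v u.1).mp u.2
    rw [hS' v u.1 hadj]
    exact anti u.1 v hadj.symm
  rw [Finset.sum_congr rfl (fun u _ => hterm u), Finset.sum_neg_distrib,
    Finset.sum_attach (G.neighborFinset v) (fun x => S' (v, x))]
  have hext : ∑ x ∈ G.neighborFinset v, S' (v, x) = ∑ w : V, S' (v, w) := by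
    apply Finset.sum_subset (Finset.subset_univ _)
    intro x _ hx
    exact hS'0 (v, x) (fun h => hx ((G.mem_neighborFinset v x).mpr h))
  rw [hext]
  have h0 : Out v = 0 := by rw [hOutc v, hc0]
  rw [hOutdef] at h0
  rw [neg_eq_zero]
  exact h0
end

section
/- Let G be a finite connected simple undirected graph with minimum degree at least 2 which is not a cycle (equivalently, |E| > |V|), with adjacency matrix A, and let T be the adjacency matrix of the oriented line graph of G (the Hashimoto matrix). If s is a vector on the directed edges of G satisfying T s = -s, then s is symmetric, i.e. s_{(u,v)} = s_{(v,u)} for every directed edge (u,v), and for every vertex v the incoming values sum to zero: Σ_{u : A_{uv}=1} s_{(u,v)} = 0. -/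
open Matrix Finset

/-- Let `G` be a finite connected simple graph with minimum degree at least `2` which is
not a cycle (equivalently `|E| > |V|`), and let `T` be the Hashimoto matrix (adjacency
matrix of the oriented line graph). If `T s = -s`, then `s` is symmetric on directed
edges and its incoming values at every vertex sum to zero. -/
theorem hashimoto_neg_one_vector_symmetric
    {V : Type*} [Fintype V] [DecidableEq V]
    (G : SimpleGraph V) [DecidableRel G.Adj]
    (hconn : G.Connected)
    (hdeg : ∀ v : V, 2 ≤ G.degree v)
    (hcard : Fintype.card V < G.edgeFinset.card)
    (T : Matrix {p : V × V // G.Adj p.1 p.2} {p : V × V // G.Adj p.1 p.2} ℝ)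
    (hT : ∀ e f : {p : V × V // G.Adj p.1 p.2},
      T e f = if e.1.2 = f.1.1 ∧ e.1.1 ≠ f.1.2 then 1 else 0)
    (s : {p : V × V // G.Adj p.1 p.2} → ℝ)
    (hs : T *ᵥ s = - s) :
    (∀ (u v : V) (huv : G.Adj u v), s ⟨(u, v), huv⟩ = s ⟨(v, u), huv.symm⟩) ∧
    (∀ v : V, ∑ u ∈ (G.neighborFinset v).attach,
      s ⟨(u.1, v), ((G.mem_neighborFinset v u.1).mp u.2).symm⟩ = 0) := by
  classical
  -- totalize s
  set s' : V → V → ℝ := fun u v => if h : G.Adj u v then s ⟨(u, v), h⟩ else 0 with hs'def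
  have hs'val : ∀ (u v : V) (h : G.Adj u v), s' u v = s ⟨(u, v), h⟩ := by
    intro u v h; simp [hs'def, h]
  -- outgoing sum
  set f : V → ℝ := fun v => ∑ x ∈ G.neighborFinset v, s' v x with hfdef
  -- basic consequence of the eigen-equation
  have key : ∀ (u v : V) (h : G.Adj u v), s' v u - s' u v = f v := by
    intro u v h
    have heq := congrFun hs ⟨(u, v), h⟩
    rw [Matrix.mulVec, dotProduct] at heq
    have hsum : ∑ e' : {p : V × V // G.Adj p.1 p.2}, T ⟨(u, v), h⟩ e' * s e'
        = ∑ x ∈ (G.neighborFinset v).erase u, s' v x := by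
      have h1 : ∀ e' : {p : V × V // G.Adj p.1 p.2},
          T ⟨(u, v), h⟩ e' * s e'
          = (fun p : V × V => (if G.Adj p.1 p.2 then
              (if v = p.1 ∧ u ≠ p.2 then 1 else 0) * s' p.1 p.2 else 0)) e'.1 := by
        rintro ⟨⟨w, x⟩, hwx⟩
        simp only [hT, hs'val _ _ hwx, hwx, if_true]
      rw [Fintype.sum_congr _ _ h1]
      rw [← Finset.sum_subtype (Finset.filter (fun p : V × V => G.Adj p.1 p.2) Finset.univ)
        (by intro p; simp)
        (fun p : V × V => if G.Adj p.1 p.2 then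
          (if v = p.1 ∧ u ≠ p.2 then 1 else 0) * s' p.1 p.2 else 0)]
      rw [Finset.sum_filter_of_ne (by intro p _ hne; by_contra hadj; exact hne (if_neg hadj)),
        Fintype.sum_prod_type]
      rw [Finset.sum_eq_single v]
      · have hcollapse : ∀ x : V,
            (if G.Adj v x then (if v = v ∧ u ≠ x then 1 else 0) * s' v x else 0)
            = if x ∈ (G.neighborFinset v).erase u then s' v x else 0 := by
          intro x
          by_cases hax : G.Adj v x
          · by_cases hux : u = x
            · subst hux; simp [hax]
            · have hmem : x ∈ (G.neighborFinset v).erase u :=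
                Finset.mem_erase.mpr ⟨fun e => hux e.symm,
                  (G.mem_neighborFinset v x).mpr hax⟩
              simp [hax, hux, hmem]
          · have hnm : x ∉ (G.neighborFinset v).erase u := fun hx =>
              hax ((G.mem_neighborFinset v x).mp (Finset.mem_of_mem_erase hx))
            simp [hax, hnm]
        rw [Finset.sum_congr rfl (fun x _ => hcollapse x), Finset.sum_ite_mem,
          Finset.univ_inter]
      · intro w _ hw
        apply Finset.sum_eq_zero
        intro x _
        have : ¬(v = w ∧ u ≠ x) := fun ⟨hvw, _⟩ => hw hvw.symm
        simp [this]
      · intro hv; exact absurd (Finset.mem_univ v) hv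
    rw [hsum] at heq
    have hmem := (G.mem_neighborFinset v u).mpr h.symm
    have := Finset.sum_erase_add (G.neighborFinset v) (fun x => s' v x) hmem
    have heq2 : f v - s' v u = -s ⟨(u, v), h⟩ := by
      rw [hfdef]; simp only [Pi.neg_apply] at heq; linarith [heq, this]
    rw [hs'val u v h]; linarith [heq2]
  -- antisymmetry of f on edges
  have fanti : ∀ (u v : V), G.Adj u v → f u = -f v := by
    intro u v h
    have h1 := key u v h
    have h2 := key v u h.symm
    linarith
  -- f² is constant on the connected graph
  have fconst : ∀ u v : V, f u ^ 2 = f v ^ 2 := by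
    intro u v
    obtain ⟨w⟩ := hconn.preconnected u v
    induction w with
    | nil => rfl
    | cons ha p ih =>
      rename_i a b c
      have := fanti a b ha
      rw [← ih]; rw [this]; ring
  -- incoming sum in terms of f
  have hin : ∀ v : V, ∑ u ∈ G.neighborFinset v, s' u v = f v * (1 - (G.degree v : ℝ)) := by
    intro v
    have : ∀ u ∈ G.neighborFinset v, s' u v = s' v u - f v := by
      intro u hu
      have h : G.Adj v u := (G.mem_neighborFinset v u).mp hu
      linarith [key u v h.symm]
    rw [Finset.sum_congr rfl this, Finset.sum_sub_distrib, Finset.sum_const,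
      SimpleGraph.card_neighborFinset_eq_degree]
    have hfv : (∑ x ∈ G.neighborFinset v, s' v x) = f v := rfl
    rw [hfv, nsmul_eq_mul]
    ring
  -- the double-sum swap identity
  have swap : ∀ F : V → V → ℝ,
      (∑ v, ∑ x ∈ G.neighborFinset v, F v x) = ∑ x, ∑ v ∈ G.neighborFinset x, F v x := by
    intro F
    have h1 : ∀ v : V, ∑ x ∈ G.neighborFinset v, F v x
        = ∑ x, if G.Adj v x then F v x else 0 := by
      intro v
      rw [SimpleGraph.neighborFinset_eq_filter, Finset.sum_filter]
    have h2 : ∀ x : V, ∑ v ∈ G.neighborFinset x, F v x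
        = ∑ v, if G.Adj v x then F v x else 0 := by
      intro x
      rw [SimpleGraph.neighborFinset_eq_filter, Finset.sum_filter]
      apply Finset.sum_congr rfl
      intro v _
      by_cases h : G.Adj v x
      · simp [h, h.symm]
      · have h2 : ¬ G.Adj x v := fun h' => h h'.symm
        simp [h, h2]
    simp only [h1, h2]
    exact Finset.sum_comm
  -- main identity : ∑ f v ^ 2 * (2 - deg v) = 0
  have main : ∑ v, f v ^ 2 * (2 - (G.degree v : ℝ)) = 0 := by
    have lhs1 : ∑ v, f v ^ 2 = ∑ v, ∑ x ∈ G.neighborFinset v, f v * s' v x := by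
      apply Finset.sum_congr rfl
      intro v _
      rw [← Finset.mul_sum]
      have hfv : (∑ x ∈ G.neighborFinset v, s' v x) = f v := rfl
      rw [hfv]; ring
    have lhs2 : (∑ x, ∑ v ∈ G.neighborFinset x, f v * s' v x)
        = ∑ x, -(f x * (f x * (1 - (G.degree x : ℝ)))) := by
      apply Finset.sum_congr rfl
      intro x _
      have : ∀ v ∈ G.neighborFinset x, f v * s' v x = -f x * s' v x := by
        intro v hv
        have h : G.Adj x v := (G.mem_neighborFinset x v).mp hv
        rw [fanti v x h.symm]
      rw [Finset.sum_congr rfl this, ← Finset.mul_sum, hin x]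
      ring
    have := lhs1.trans ((swap (fun v x => f v * s' v x)).trans lhs2)
    have h2 : ∑ v, (f v ^ 2 + f v * (f v * (1 - (G.degree v : ℝ)))) =
        ∑ v, f v ^ 2 * (2 - (G.degree v : ℝ)) := by
      apply Finset.sum_congr rfl; intro v _; ring
    rw [← h2, Finset.sum_add_distrib, this, ← Finset.sum_add_distrib]
    simp
  -- conclude f ≡ 0
  have hV : Nonempty V := hconn.nonempty
  obtain ⟨v0⟩ := hV
  have hfc : ∀ v : V, f v ^ 2 = f v0 ^ 2 := fun v => fconst v v0
  have hsumdeg : (∑ v, (G.degree v : ℝ)) = 2 * (G.edgeFinset.card : ℝ) := by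
    rw [← Nat.cast_sum, SimpleGraph.sum_degrees_eq_twice_card_edges]
    push_cast; ring
  have main2 : f v0 ^ 2 * (2 * (Fintype.card V : ℝ) - 2 * (G.edgeFinset.card : ℝ)) = 0 := by
    have : ∑ v, f v ^ 2 * (2 - (G.degree v : ℝ))
        = f v0 ^ 2 * (2 * (Fintype.card V : ℝ) - 2 * (G.edgeFinset.card : ℝ)) := by
      rw [Finset.sum_congr rfl (fun v _ => by rw [hfc v])]
      rw [← Finset.mul_sum, Finset.sum_sub_distrib, Finset.sum_const, hsumdeg,
        nsmul_eq_mul, Finset.card_univ]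
      ring
    rw [← this, main]
  have hne : (2 * (Fintype.card V : ℝ) - 2 * (G.edgeFinset.card : ℝ)) ≠ 0 := by
    have : (Fintype.card V : ℝ) < (G.edgeFinset.card : ℝ) := by exact_mod_cast hcard
    linarith
  have hf0 : ∀ v : V, f v = 0 := by
    intro v
    have : f v ^ 2 = 0 := by
      rw [hfc v]
      exact (mul_eq_zero.mp main2).resolve_right hne
    exact pow_eq_zero_iff (by norm_num) |>.mp this
  constructor
  · intro u v huv
    have := key u v huv
    rw [hf0 v] at this
    rw [← hs'val u v huv, ← hs'val v u huv.symm]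
    linarith
  · intro v
    have h1 : ∑ u ∈ (G.neighborFinset v).attach,
        s ⟨(u.1, v), ((G.mem_neighborFinset v u.1).mp u.2).symm⟩
        = ∑ u ∈ G.neighborFinset v, s' u v := by
      rw [← Finset.sum_attach (G.neighborFinset v) (fun u => s' u v)]
      apply Finset.sum_congr rfl
      intro u _
      rw [hs'val u.1 v ((G.mem_neighborFinset v u.1).mp u.2).symm]
    rw [h1, hin v, hf0 v]
    ring
end

section
/- Let G = (V,E) be a finite connected simple undirected graph with minimum degree at least 2 which is not a cycle (equivalently, |E| > |V|), with adjacency matrix A, and let T be the adjacency matrix of the oriented line graph of G (the Hashimoto matrix). Then the eigenspace of T for the eigenvalue 1, i.e. the space of vectors s on directed edges with T s = s, has dimension exactly |E| - |V| + 1. -/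
set_option linter.unusedSectionVars false
set_option maxHeartbeats 1000000

open Matrix Finset Module LinearMap

namespace Hx

variable {V : Type*} [Fintype V] [DecidableEq V] (G : SimpleGraph V) [DecidableRel G.Adj]

abbrev D := {p : V × V // G.Adj p.1 p.2}

def rev (e : D G) : D G := ⟨(e.1.2, e.1.1), e.2.symm⟩

@[simp] lemma rev_rev (e : D G) : rev G (rev G e) = e := rfl

noncomputable def ord : V → Fin (Fintype.card V) := Fintype.equivFin V

def pos (e : D G) : Prop := ord e.1.1 < ord e.1.2

noncomputable instance : DecidablePred (pos G) := fun e => by unfold pos; infer_instance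

lemma pos_or (e : D G) : pos G e ∨ pos G (rev G e) := by
  have h : ord e.1.1 ≠ ord e.1.2 := fun h => G.ne_of_adj e.2 ((Fintype.equivFin V).injective h)
  rcases lt_or_gt_of_ne h with h | h
  · exact Or.inl h
  · exact Or.inr h

lemma not_pos_rev (e : D G) (h : pos G e) : ¬ pos G (rev G e) := by
  simpa [pos, rev] using le_of_lt h

abbrev Pos := {e : D G // pos G e}

noncomputable def posEquiv : D G ≃ Pos G ⊕ Pos G where
  toFun e := if h : pos G e then .inl ⟨e, h⟩ else .inr ⟨rev G e, (pos_or G e).resolve_left h⟩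
  invFun x := x.elim (fun p => p.1) (fun p => rev G p.1)
  left_inv e := by by_cases h : pos G e <;> simp [h]
  right_inv x := by
    cases x with
    | inl p => simp [p.2]
    | inr p => simp [not_pos_rev G p.1 p.2]

lemma card_D : Fintype.card (D G) = 2 * G.edgeFinset.card := by
  rw [← SimpleGraph.dart_card_eq_twice_card_edges]
  exact Fintype.card_congr ⟨fun e => ⟨e.1, e.2⟩, fun d => ⟨d.toProd, d.adj⟩,
    fun e => rfl, fun d => rfl⟩

lemma card_Pos : Fintype.card (Pos G) = G.edgeFinset.card := by
  have h := Fintype.card_congr (posEquiv G)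
  rw [Fintype.card_sum, card_D] at h
  omega

noncomputable def div : ((D G) → ℝ) →ₗ[ℝ] (V → ℝ) :=
  Matrix.toLin' (Matrix.of fun v (e : D G) => if e.1.1 = v then 1 else 0)

lemma div_apply (s : D G → ℝ) (v : V) :
    div G s v = ∑ e : D G, if e.1.1 = v then s e else 0 := by
  simp [div, Matrix.toLin'_apply, Matrix.mulVec, dotProduct, ite_mul]

noncomputable def anti : ((D G) → ℝ) →ₗ[ℝ] ((D G) → ℝ) :=
  LinearMap.id + LinearMap.funLeft ℝ ℝ (rev G)

lemma anti_apply (s : D G → ℝ) (e : D G) : anti G s e = s e + s (rev G e) := rfl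

noncomputable def restr : (ker (anti G)) →ₗ[ℝ] (Pos G → ℝ) :=
  (LinearMap.funLeft ℝ ℝ (fun p : Pos G => p.1)).comp (ker (anti G)).subtype

lemma sum_div' (s : D G → ℝ) : ∑ v, div G s v = ∑ e : D G, s e := by
  simp only [div_apply]
  rw [Finset.sum_comm]
  simp

lemma sum_rev (s : D G → ℝ) : ∑ e : D G, s (rev G e) = ∑ e : D G, s e :=
  Fintype.sum_equiv ⟨rev G, rev G, fun _ => rfl, fun _ => rfl⟩ _ _ (fun _ => rfl)

lemma mem_ker_anti {s : D G → ℝ} (hs : s ∈ ker (anti G)) (e : D G) :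
    s (rev G e) = - s e := by
  have := congrFun (LinearMap.mem_ker.1 hs) e
  simp only [anti_apply] at this
  change s e + s (rev G e) = 0 at this
  linarith

lemma sum_eq_zero_of_anti (s : D G → ℝ) (hs : s ∈ ker (anti G)) :
    ∑ e : D G, s e = 0 := by
  have h2 : (∑ e : D G, s e) + (∑ e : D G, s e) = 0 := by
    nth_rewrite 2 [← sum_rev]
    rw [← Finset.sum_add_distrib]
    refine Finset.sum_eq_zero fun e _ => ?_
    have := mem_ker_anti G hs e
    linarith
  linarith

def flow {u v : V} (h : G.Adj u v) : D G → ℝ := fun e =>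
  (if e = (⟨(u, v), h⟩ : D G) then 1 else 0) - (if e = (⟨(v, u), h.symm⟩ : D G) then 1 else 0)

lemma dart_ne {u v : V} (h : G.Adj u v) : (⟨(u, v), h⟩ : D G) ≠ ⟨(v, u), h.symm⟩ :=
  fun hh => h.ne (congrArg (fun x : D G => x.1.1) hh)

lemma flow_mem_ker {u v : V} (h : G.Adj u v) : flow G h ∈ ker (anti G) := by
  rw [LinearMap.mem_ker]
  funext e
  have h1 : rev G e = ⟨(u, v), h⟩ ↔ e = ⟨(v, u), h.symm⟩ := by
    constructor
    · intro he; rw [← rev_rev G e, he]; rfl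
    · intro he; rw [he]; rfl
  have h2 : rev G e = ⟨(v, u), h.symm⟩ ↔ e = ⟨(u, v), h⟩ := by
    constructor
    · intro he; rw [← rev_rev G e, he]; rfl
    · intro he; rw [he]; rfl
  simp only [anti_apply, flow, Pi.zero_apply, h1, h2]
  ring

lemma div_flow {u v : V} (h : G.Adj u v) :
    div G (flow G h) = fun w => (if u = w then (1:ℝ) else 0) - (if v = w then 1 else 0) := by
  funext w
  rw [div_apply]
  have key : ∀ e : D G, (if e.1.1 = w then flow G h e else 0) =
      (if e = (⟨(u, v), h⟩ : D G) then (if u = w then (1:ℝ) else 0) else 0)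
      - (if e = (⟨(v, u), h.symm⟩ : D G) then (if v = w then (1:ℝ) else 0) else 0) := by
    intro e
    by_cases c1 : e = (⟨(u, v), h⟩ : D G)
    · rw [c1]; simp [flow, dart_ne G h]
    · by_cases c2 : e = (⟨(v, u), h.symm⟩ : D G)
      · rw [c2]
        by_cases cv : v = w
        · have hw : ¬ u = w := fun hw => h.ne (hw.trans cv.symm)
          simp [flow, cv, hw, (dart_ne G h).symm]
        · simp [flow, cv, (dart_ne G h).symm]
      · simp [flow, c1, c2]
  simp only [key, Finset.sum_sub_distrib, Finset.sum_ite_eq' Finset.univ, Finset.mem_univ,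
    if_true]

noncomputable def dmap : (ker (anti G)) →ₗ[ℝ] (V → ℝ) :=
  (div G).comp (ker (anti G)).subtype

lemma flow_mem_range {u v : V} (h : G.Adj u v) :
    (fun w => (if u = w then (1:ℝ) else 0) - (if v = w then 1 else 0)) ∈ range (dmap G) := by
  refine ⟨⟨flow G h, flow_mem_ker G h⟩, ?_⟩
  simpa [dmap] using div_flow G h

def sumF : (V → ℝ) →ₗ[ℝ] ℝ where
  toFun g := ∑ v, g v
  map_add' := by intros; simp [Finset.sum_add_distrib]
  map_smul' := by intros; simp [Finset.mul_sum]

lemma delta_mem_range {u v : V} (h : G.Reachable u v) :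
    (fun w => (if u = w then (1:ℝ) else 0) - (if v = w then 1 else 0)) ∈ range (dmap G) := by
  obtain ⟨p⟩ := h
  induction p with
  | nil =>
    convert Submodule.zero_mem (range (dmap G)) using 1
    funext w; simp
  | @cons a b c hadj p ih =>
    have heq : (fun w => (if a = w then (1:ℝ) else 0) - (if c = w then 1 else 0))
        = ((fun w => (if a = w then (1:ℝ) else 0) - (if b = w then 1 else 0))
          + fun w => (if b = w then (1:ℝ) else 0) - (if c = w then 1 else 0)) := by
      funext w; simp only [Pi.add_apply]; ring
    rw [heq]
    exact Submodule.add_mem _ (flow_mem_range G hadj) ih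

lemma sumF_apply (g : V → ℝ) : sumF g = ∑ v, g v := rfl

lemma range_dmap (hconn : G.Connected) : range (dmap G) = ker (sumF (V := V)) := by
  apply le_antisymm
  · rintro _ ⟨s, rfl⟩
    rw [LinearMap.mem_ker, sumF_apply]
    have : dmap G s = div G s.1 := rfl
    rw [this, sum_div']
    exact sum_eq_zero_of_anti G s.1 s.2
  · intro g hg
    have hg' : ∑ v, g v = 0 := hg
    obtain ⟨v₀⟩ := hconn.nonempty
    have hrep : g = ∑ v : V, g v •
        (fun w => (if v = w then (1:ℝ) else 0) - (if v₀ = w then 1 else 0)) := by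
      funext w
      rw [Finset.sum_apply]
      simp only [Pi.smul_apply, smul_eq_mul, mul_sub, Finset.sum_sub_distrib, mul_ite,
        mul_one, mul_zero]
      rw [Finset.sum_ite_eq' Finset.univ w g]
      by_cases hc : v₀ = w <;> simp [hc, hg']
    rw [hrep]
    exact Submodule.sum_mem _ fun v _ => Submodule.smul_mem _ _ (delta_mem_range G (hconn v v₀))
lemma restr_bij : Function.Bijective (restr G) := by
  constructor
  · intro s t hst
    ext e
    rcases pos_or G e with h | h
    · exact congrFun hst ⟨e, h⟩
    · have := congrFun hst ⟨rev G e, h⟩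
      simp only [restr, LinearMap.comp_apply, LinearMap.funLeft_apply] at this ⊢
      have h1 := mem_ker_anti G s.2 e
      have h2 := mem_ker_anti G t.2 e
      change (s : D G → ℝ) (rev G e) = (t : D G → ℝ) (rev G e) at this
      change (s : D G → ℝ) e = (t : D G → ℝ) e
      rw [h1, h2] at this
      linarith
  · intro g
    set s : D G → ℝ := fun e =>
      if h : pos G e then g ⟨e, h⟩ else - g ⟨rev G e, (pos_or G e).resolve_left h⟩ with hs
    have hmem : s ∈ ker (anti G) := by
      rw [LinearMap.mem_ker]
      funext e
      rcases pos_or G e with h | h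
      · have h' := not_pos_rev G e h
        simp only [anti_apply, Pi.zero_apply, hs]
        rw [dif_pos h, dif_neg h']
        simp
      · have h' := not_pos_rev G (rev G e) h
        rw [rev_rev] at h'
        simp only [anti_apply, Pi.zero_apply, hs]
        rw [dif_neg h', dif_pos h]
        simp
    refine ⟨⟨s, hmem⟩, ?_⟩
    funext p
    simp only [restr, LinearMap.comp_apply, LinearMap.funLeft_apply, Submodule.subtype_apply, hs]
    rw [dif_pos p.2]

lemma finrank_ker_anti : finrank ℝ (ker (anti G)) = Fintype.card (Pos G) := by
  rw [(LinearEquiv.ofBijective (restr G) (restr_bij G)).finrank_eq,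
    Module.finrank_fintype_fun_eq_card]

lemma toLin_apply (T : Matrix (D G) (D G) ℝ)
    (hT : ∀ e f : D G, T e f = if e.1.2 = f.1.1 ∧ e.1.1 ≠ f.1.2 then 1 else 0)
    (s : D G → ℝ) (e : D G) :
    Matrix.toLin' T s e = div G s e.1.2 - s (rev G e) := by
  rw [Matrix.toLin'_apply]
  have hmv : (T *ᵥ s) e = ∑ f, T e f * s f := rfl
  rw [hmv]
  simp only [hT, ite_mul, one_mul, zero_mul, div_apply]
  have key : ∀ f : D G, (if f.1.1 = e.1.2 then s f else 0)
      - (if e.1.2 = f.1.1 ∧ e.1.1 ≠ f.1.2 then s f else 0)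
      = if f = rev G e then s f else 0 := by
    intro f
    by_cases h1 : f.1.1 = e.1.2
    · by_cases h2 : f.1.2 = e.1.1
      · have hf : f = rev G e := Subtype.ext (Prod.ext h1 h2)
        have hcond : ¬ (e.1.2 = f.1.1 ∧ e.1.1 ≠ f.1.2) := fun hc => hc.2 h2.symm
        rw [if_pos h1, if_neg hcond, if_pos hf]; ring
      · have hf : f ≠ rev G e := fun hh => h2 (by rw [hh]; rfl)
        rw [if_pos h1, if_pos ⟨h1.symm, fun hh => h2 hh.symm⟩, if_neg hf]; ring
    · have hf : f ≠ rev G e := fun hh => h1 (by rw [hh]; rfl)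
      rw [if_neg h1, if_neg (fun hc => h1 hc.1.symm), if_neg hf]; ring
  have hsum : ∑ f : D G, ((if f.1.1 = e.1.2 then s f else 0)
      - (if e.1.2 = f.1.1 ∧ e.1.1 ≠ f.1.2 then s f else 0)) = s (rev G e) := by
    simp only [key]
    simp [Finset.sum_ite_eq' Finset.univ (rev G e) s]
  rw [Finset.sum_sub_distrib] at hsum
  linarith

lemma eigen_eq (hconn : G.Connected) (hcard : Fintype.card V < G.edgeFinset.card)
    (T : Matrix (D G) (D G) ℝ)
    (hT : ∀ e f : D G, T e f = if e.1.2 = f.1.1 ∧ e.1.1 ≠ f.1.2 then 1 else 0) :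
    Module.End.eigenspace (Matrix.toLin' T) 1 = ker (anti G) ⊓ ker (div G) := by
  ext s
  rw [Module.End.mem_eigenspace_iff, one_smul, Submodule.mem_inf,
    LinearMap.mem_ker, LinearMap.mem_ker]
  constructor
  · intro hs
    have key : ∀ e : D G, s e + s (rev G e) = div G s e.1.2 := by
      intro e
      have h := congrFun hs e
      rw [toLin_apply G T hT s e] at h
      linarith
    have hadjconst : ∀ e : D G, div G s e.1.1 = div G s e.1.2 := by
      intro e
      have h1 := key e
      have h2 := key (rev G e)
      rw [rev_rev] at h2
      change s (rev G e) + s e = div G s e.1.1 at h2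
      linarith
    obtain ⟨v₀⟩ := hconn.nonempty
    have hconst : ∀ v, div G s v = div G s v₀ := by
      intro v
      obtain ⟨p⟩ := hconn v v₀
      induction p with
      | nil => rfl
      | @cons a b c hadj p ih => exact (hadjconst ⟨(a, b), hadj⟩).trans ih
    set c := div G s v₀ with hc
    have hsum1 : ∑ v, div G s v = (Fintype.card V : ℝ) * c := by
      rw [Finset.sum_congr rfl (fun v _ => hconst v)]
      simp [Finset.sum_const, Finset.card_univ, mul_comm]
    have hsum2 : ∑ v, div G s v = ∑ e : D G, s e := sum_div' G s
    have hsum3 : (2:ℝ) * ∑ e : D G, s e = 2 * (G.edgeFinset.card : ℝ) * c := by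
      calc (2:ℝ) * ∑ e : D G, s e = ∑ e : D G, s e + ∑ e : D G, s (rev G e) := by
            rw [sum_rev]; ring
        _ = ∑ e : D G, (s e + s (rev G e)) := Finset.sum_add_distrib.symm
        _ = ∑ e : D G, div G s e.1.2 := Finset.sum_congr rfl (fun e _ => key e)
        _ = ∑ _e : D G, c := Finset.sum_congr rfl (fun e _ => hconst _)
        _ = (Fintype.card (D G) : ℝ) * c := by
            simp [Finset.sum_const, Finset.card_univ, mul_comm]
        _ = 2 * (G.edgeFinset.card : ℝ) * c := by
            rw [card_D G]; push_cast; ring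
    have hczero : c = 0 := by
      have hmn : (Fintype.card V : ℝ) ≠ (G.edgeFinset.card : ℝ) := by
        exact_mod_cast (ne_of_lt hcard)
      have h4 : ((Fintype.card V : ℝ) - (G.edgeFinset.card : ℝ)) * c = 0 := by linarith
      rcases mul_eq_zero.1 h4 with h | h
      · exact absurd (sub_eq_zero.1 h) hmn
      · exact h
    have hzero : ∀ v, div G s v = 0 := fun v => (hconst v).trans hczero
    constructor
    · funext e
      have := key e
      rw [hzero] at this
      simpa [anti_apply] using this
    · funext v
      exact hzero v
  · rintro ⟨ha, hd⟩
    funext e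
    rw [toLin_apply G T hT s e]
    have h1 : div G s e.1.2 = 0 := congrFun hd e.1.2
    have h2 : s (rev G e) = - s e := mem_ker_anti G (LinearMap.mem_ker.2 ha) e
    rw [h1, h2]; ring

end Hx

open Matrix Finset Module LinearMap Hx in
/-- Let `G = (V, E)` be a finite connected simple graph with minimum degree at least `2`
which is not a cycle (equivalently `|E| > |V|`), and let `T` be the Hashimoto matrix
(adjacency matrix of the oriented line graph, indexed by directed edges). Then the
eigenspace of `T` for the eigenvalue `1` has dimension exactly `|E| - |V| + 1`
(stated additively to avoid natural subtraction). -/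
theorem finrank_hashimoto_eigenspace_one
    {V : Type*} [Fintype V] [DecidableEq V]
    (G : SimpleGraph V) [DecidableRel G.Adj]
    (hconn : G.Connected)
    (hdeg : ∀ v : V, 2 ≤ G.degree v)
    (hcard : Fintype.card V < G.edgeFinset.card)
    (T : Matrix {p : V × V // G.Adj p.1 p.2} {p : V × V // G.Adj p.1 p.2} ℝ)
    (hT : ∀ e f : {p : V × V // G.Adj p.1 p.2},
      T e f = if e.1.2 = f.1.1 ∧ e.1.1 ≠ f.1.2 then 1 else 0) :
    Module.finrank ℝ (Module.End.eigenspace (Matrix.toLin' T) 1) + Fintype.card V =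
      G.edgeFinset.card + 1 := by
  rw [eigen_eq G hconn hcard T hT]
  have e1 : finrank ℝ (ker (dmap G)) =
      finrank ℝ ((ker (anti G) ⊓ ker (div G) : Submodule ℝ (D G → ℝ))) := by
    have hcomap : Submodule.comap (ker (anti G)).subtype (ker (anti G) ⊓ ker (div G))
        = ker (dmap G) := by
      ext x
      simp [dmap, Submodule.mem_comap, x.2]
    rw [← hcomap]
    exact (Submodule.comapSubtypeEquivOfLe inf_le_left).finrank_eq
  rw [← e1]
  have rn := LinearMap.finrank_range_add_finrank_ker (dmap G)
  rw [range_dmap G hconn, finrank_ker_anti, card_Pos] at rn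
  have rn2 := LinearMap.finrank_range_add_finrank_ker (sumF (V := V))
  rw [Module.finrank_fintype_fun_eq_card] at rn2
  have hsur : range (sumF (V := V)) = ⊤ := by
    rw [LinearMap.range_eq_top]
    intro r
    obtain ⟨v₀⟩ := hconn.nonempty
    exact ⟨fun w => if w = v₀ then r else 0, by simp [sumF_apply]⟩
  rw [hsur, finrank_top, Module.finrank_self] at rn2
  omega
end
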